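/- For every trace t₁ and t₂ and every set of events U ⊆ Evt, if t₁ ⋉ t₂ then hide_U(t₁) ⋉ hide_U(t₂), where hide_U deletes from a trace each occurrence of each event in U (including inside critical segments). -/

import Mathlib

/- Tokens, traces, the unwrap rewriting relation and the trace simulation
relation of "Required Behavior of Sequence Diagrams: Semantics and
Conformance" (Lu & Kim). -/

namespace SDPaper

/-- An atom is an event or a guard condition. -/
inductive Atom (E C : Type) : Type where
  | evt : E → Atom E C
  | cnd : C → Atom E C

/-- A token is an event, a condition, or a critical segment wrapping a finite
sequence of events and conditions. -/
inductive Tok (E C : Type) : Type where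
  | atom : Atom E C → Tok E C
  | crit : List (Atom E C) → Tok E C

/-- A trace is a finite sequence of tokens. -/
abbrev Trace (E C : Type) : Type := List (Tok E C)

/-- The token carrying a guard condition. -/
def condTok {E C : Type} (c : C) : Tok E C := Tok.atom (Atom.cnd c)

/-- The token carrying an event. -/
def evtTok {E C : Type} (e : E) : Tok E C := Tok.atom (Atom.evt e)

/-- The unwrap rewriting relation `↷` on traces: one step exposes one critical
segment, `α⟨σ⟩β ↷ ασβ`. -/
inductive Unwrap {E C : Type} : Trace E C → Trace E C → Prop where
  | step (α β : Trace E C) (σ : List (Atom E C)) :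
      Unwrap (α ++ Tok.crit σ :: β) (α ++ σ.map Tok.atom ++ β)

/-- The reflexive–transitive closure `↷*` of the unwrap relation. -/
def Unwraps {E C : Type} : Trace E C → Trace E C → Prop :=
  Relation.ReflTransGen Unwrap

section Sim

variable {E C : Type} (ent : C → C → Prop)

/-- Simulation on atoms: `c₁ ⋉ c₂` if `c₂ ⊨_c c₁`; `e₁ ⋉ e₂` if `e₁ = e₂`.
Here `ent c₁ c₂` denotes the entailment `c₁ ⊨_c c₂`. -/
inductive AtomSim : Atom E C → Atom E C → Prop where
  | evt (e : E) : AtomSim (Atom.evt e) (Atom.evt e)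
  | cnd {c₁ c₂ : C} : ent c₂ c₁ → AtomSim (Atom.cnd c₁) (Atom.cnd c₂)

/-- Simulation on sequences of events and conditions (used inside critical
segments, which contain no nested critical segments): there is a strictly
increasing reindexing function `η` such that corresponding atoms are similar
and every position outside the image of `η` carries a condition. -/
def SeqSim (α γ : List (Atom E C)) : Prop :=
  ∃ η : Fin α.length → Fin γ.length, StrictMono η ∧
    (∀ i : Fin α.length, AtomSim ent (α.get i) (γ.get (η i))) ∧
    (∀ j : Fin γ.length, (∀ i, η i ≠ j) → ∃ c : C, γ.get j = Atom.cnd c)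

/-- Simulation on tokens: a critical segment can only be simulated by a
critical segment, `⟨α⟩ ⋉ ⟨γ⟩` if `α ⋉ γ`. -/
inductive TokSim : Tok E C → Tok E C → Prop where
  | atom {a b : Atom E C} : AtomSim ent a b → TokSim (Tok.atom a) (Tok.atom b)
  | crit {α γ : List (Atom E C)} : SeqSim ent α γ → TokSim (Tok.crit α) (Tok.crit γ)

/-- The trace simulation relation `α ⋉ γ`: there are a trace `β` with
`α ↷* β` and a strictly increasing `η : dom(β) → dom(γ)` such that
`β(i) ⋉ γ(η(i))` for every `i` and every position of `γ` outside the image of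
`η` carries a condition. -/
def TraceSim (α γ : Trace E C) : Prop :=
  ∃ β : Trace E C, Unwraps α β ∧
    ∃ η : Fin β.length → Fin γ.length, StrictMono η ∧
      (∀ i : Fin β.length, TokSim ent (β.get i) (γ.get (η i))) ∧
      (∀ j : Fin γ.length, (∀ i, η i ≠ j) → ∃ c : C, γ.get j = condTok c)

end Sim

end SDPaper

namespace SDPaper

open Classical in
/-- `hide_U` on sequences of events and conditions: delete each occurrence of
each event in `U`. -/
noncomputable def hideAtoms {E C : Type} (U : Set E) (σ : List (Atom E C)) :
    List (Atom E C) :=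
  σ.filterMap fun a =>
    match a with
    | Atom.evt e => if e ∈ U then none else some (Atom.evt e)
    | Atom.cnd c => some (Atom.cnd c)

open Classical in
/-- `hide_U` on traces: replace each occurrence of each event `e ∈ U`
(including inside critical segments) with the empty string `ε`. -/
noncomputable def hideTrace {E C : Type} (U : Set E) (t : Trace E C) : Trace E C :=
  t.filterMap fun tok =>
    match tok with
    | Tok.atom (Atom.evt e) => if e ∈ U then none else some (Tok.atom (Atom.evt e))
    | Tok.atom (Atom.cnd c) => some (Tok.atom (Atom.cnd c))
    | Tok.crit σ => some (Tok.crit (hideAtoms U σ))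

/-! The index-based simulation (a strictly increasing `η` whose unmatched targets are conditions)
is equivalent to the inductive embedding `PadEmbed`, built by matching heads or skipping a padding
element. In that form it is preserved by every `filterMap` that drops or keeps both members of a
matched pair together and keeps every padding element. Hiding is such a filter at both levels,
since matched atoms are equal events or related conditions and conditions are never hidden; and
hiding commutes with unwrapping, so it carries the unwrapped witness of `t₁ ⋉ t₂` to one for the
hidden traces. -/

section PadEmbed

variable {X Y : Type} {R : X → X → Prop} {P : X → Prop}

inductive PadEmbed (R : X → X → Prop) (P : X → Prop) : List X → List X → Prop
  | nil : PadEmbed R P [] []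
  | cons {a b : X} {α γ : List X} : R a b → PadEmbed R P α γ → PadEmbed R P (a :: α) (b :: γ)
  | pad {b : X} {α γ : List X} : P b → PadEmbed R P α γ → PadEmbed R P α (b :: γ)

def IsPadIndex (R : X → X → Prop) (P : X → Prop) (α γ : List X)
    (η : Fin α.length → Fin γ.length) : Prop :=
  StrictMono η ∧ (∀ i, R (α.get i) (γ.get (η i))) ∧ ∀ j, (∀ i, η i ≠ j) → P (γ.get j)

theorem PadEmbed.exists_isPadIndex {α γ : List X} (h : PadEmbed R P α γ) :
    ∃ η, IsPadIndex R P α γ η := by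
  induction h with
  | nil => exact ⟨Fin.elim0, fun i => i.elim0, fun i => i.elim0, fun j _ => j.elim0⟩
  | cons hab _ ih =>
    obtain ⟨η, hη, hR, hP⟩ := ih
    refine ⟨Fin.cons 0 (Fin.succ ∘ η), Fin.strictMono_cons.2 ⟨fun _ => Fin.succ_pos _,
      Fin.strictMono_succ.comp hη⟩, Fin.cases hab hR, Fin.cases (fun h0 => ?_) fun j hj => ?_⟩
    · exact absurd rfl (h0 0)
    · exact hP j fun i hi => hj i.succ (by simp [hi])
  | pad hb _ ih =>
    obtain ⟨η, hη, hR, hP⟩ := ih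
    refine ⟨Fin.succ ∘ η, Fin.strictMono_succ.comp hη, hR, Fin.cases (fun _ => hb) fun j hj => ?_⟩
    exact hP j fun i hi => hj i (by simp [hi])

theorem isPadIndex_pred {α γ : List X} {b : X} {η : Fin α.length → Fin (γ.length + 1)}
    (hη : StrictMono η) (hne : ∀ i, η i ≠ 0) (hR : ∀ i, R (α.get i) ((b :: γ).get (η i)))
    (hP : ∀ j : Fin γ.length, (∀ i, η i ≠ j.succ) → P (γ.get j)) :
    IsPadIndex R P α γ fun i => (η i).pred (hne i) := by
  refine ⟨fun i j hij => Fin.pred_lt_pred_iff.2 (hη hij), fun i => ?_, fun j hj => hP j ?_⟩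
  · have := hR i
    rwa [← Fin.succ_pred (η i) (hne i)] at this
  · exact fun i hi => hj i (by simp [hi])

theorem PadEmbed.of_isPadIndex {α γ : List X} {η : Fin α.length → Fin γ.length}
    (h : IsPadIndex R P α γ η) : PadEmbed R P α γ := by
  obtain ⟨hη, hR, hP⟩ := h
  induction γ generalizing α with
  | nil =>
    cases α with
    | nil => exact .nil
    | cons a α => exact (η 0).elim0
  | cons b γ ih =>
    have pad (hne : ∀ i, η i ≠ 0) : PadEmbed R P α (b :: γ) := by
      obtain ⟨hη', hR', hP'⟩ := isPadIndex_pred hη hne hR fun j hj => hP j.succ hj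
      exact .pad (hP 0 hne) (ih hη' hR' hP')
    cases α with
    | nil => exact pad fun i => i.elim0
    | cons a α =>
      by_cases h0 : η 0 = 0
      · have hne (i : Fin α.length) : η i.succ ≠ 0 := fun hi =>
          (Fin.succ_pos i).ne' (hη.injective (hi.trans h0.symm))
        obtain ⟨hη', hR', hP'⟩ := isPadIndex_pred (hη.comp Fin.strictMono_succ) hne
          (fun i => hR i.succ) fun j hj =>
            hP j.succ (Fin.cases (h0 ▸ (Fin.succ_ne_zero j).symm) hj)
        exact .cons (by simpa [h0] using hR 0) (ih hη' hR' hP')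
      · exact pad fun i hi => h0 (Fin.le_zero_iff.1 (hi ▸ hη.monotone (Fin.zero_le i)))

theorem padEmbed_iff_exists_isPadIndex {α γ : List X} :
    PadEmbed R P α γ ↔ ∃ η, IsPadIndex R P α γ η :=
  ⟨PadEmbed.exists_isPadIndex, fun ⟨_, h⟩ => PadEmbed.of_isPadIndex h⟩

theorem PadEmbed.filterMap {R' : Y → Y → Prop} {P' : Y → Prop} (f : X → Option Y)
    (hR : ∀ a b, R a b → (f a = none ∧ f b = none) ∨
      ∃ a' b', f a = some a' ∧ f b = some b' ∧ R' a' b')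
    (hP : ∀ b, P b → ∃ b', f b = some b' ∧ P' b') {α γ : List X} (h : PadEmbed R P α γ) :
    PadEmbed R' P' (α.filterMap f) (γ.filterMap f) := by
  induction h with
  | nil => exact .nil
  | @cons a b _ _ hab _ ih =>
    rcases hR a b hab with ⟨ha, hb⟩ | ⟨a', b', ha, hb, hab'⟩
    · simpa [List.filterMap_cons, ha, hb] using ih
    · simpa [List.filterMap_cons, ha, hb] using ih.cons hab'
  | @pad b _ _ hb _ ih =>
    obtain ⟨b', hb', hP'⟩ := hP b hb
    simpa [List.filterMap_cons, hb'] using ih.pad hP'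

end PadEmbed

section Hide

variable {E C : Type} (U : Set E)

theorem hideTrace_map_atom (σ : List (Atom E C)) :
    hideTrace U (σ.map Tok.atom) = (hideAtoms U σ).map Tok.atom := by
  simp only [hideTrace, hideAtoms, List.filterMap_map, List.map_filterMap]
  congr 1
  funext a
  cases a with
  | evt e => by_cases he : e ∈ U <;> simp [he]
  | cnd c => rfl

theorem hideTrace_append (t t' : Trace E C) :
    hideTrace U (t ++ t') = hideTrace U t ++ hideTrace U t' :=
  List.filterMap_append

theorem hideTrace_crit_cons (σ : List (Atom E C)) (t : Trace E C) :
    hideTrace U (Tok.crit σ :: t) = Tok.crit (hideAtoms U σ) :: hideTrace U t :=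
  rfl

theorem unwrap_hideTrace {t t' : Trace E C} (h : Unwrap t t') :
    Unwrap (hideTrace U t) (hideTrace U t') := by
  obtain ⟨α, β, σ⟩ := h
  rw [hideTrace_append, hideTrace_crit_cons, hideTrace_append, hideTrace_append,
    hideTrace_map_atom]
  exact .step _ _ _

theorem unwraps_hideTrace {t t' : Trace E C} (h : Unwraps t t') :
    Unwraps (hideTrace U t) (hideTrace U t') :=
  Relation.ReflTransGen.lift (hideTrace U) (fun _ _ => unwrap_hideTrace U) _ _ h

end Hide

section Sim

variable {E C : Type} (ent : C → C → Prop) (U : Set E)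

theorem seqSim_iff_padEmbed {α γ : List (Atom E C)} :
    SeqSim ent α γ ↔ PadEmbed (AtomSim ent) (fun a => ∃ c, a = Atom.cnd c) α γ := by
  rw [padEmbed_iff_exists_isPadIndex]
  rfl

theorem traceSim_iff_padEmbed {t₁ t₂ : Trace E C} :
    TraceSim ent t₁ t₂ ↔
      ∃ β, Unwraps t₁ β ∧ PadEmbed (TokSim ent) (fun t => ∃ c, t = condTok c) β t₂ := by
  simp only [TraceSim, padEmbed_iff_exists_isPadIndex, IsPadIndex]

theorem seqSim_hideAtoms {α γ : List (Atom E C)} (h : SeqSim ent α γ) :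
    SeqSim ent (hideAtoms U α) (hideAtoms U γ) := by
  refine (seqSim_iff_padEmbed ent).2 (((seqSim_iff_padEmbed ent).1 h).filterMap _ ?_ ?_)
  · rintro _ _ (e | hc)
    · by_cases he : e ∈ U <;> simp [he, AtomSim.evt]
    · exact .inr ⟨_, _, rfl, rfl, .cnd hc⟩
  · rintro _ ⟨c, rfl⟩
    exact ⟨_, rfl, c, rfl⟩

theorem padEmbed_hideTrace {β γ : Trace E C}
    (h : PadEmbed (TokSim ent) (fun t => ∃ c, t = condTok c) β γ) :
    PadEmbed (TokSim ent) (fun t => ∃ c, t = condTok c) (hideTrace U β) (hideTrace U γ) := by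
  refine h.filterMap _ ?_ ?_
  · rintro _ _ ((e | hc) | hseq)
    · by_cases he : e ∈ U <;> simp [he, TokSim.atom, AtomSim.evt]
    · exact .inr ⟨_, _, rfl, rfl, .atom (.cnd hc)⟩
    · exact .inr ⟨_, _, rfl, rfl, .crit (seqSim_hideAtoms ent U hseq)⟩
  · rintro _ ⟨c, rfl⟩
    exact ⟨_, rfl, c, rfl⟩

end Sim

theorem hideTrace_preserves_traceSim_general {E C : Type} (ent : C → C → Prop)
    (U : Set E) (t₁ t₂ : Trace E C) (h : TraceSim ent t₁ t₂) :
    TraceSim ent (hideTrace U t₁) (hideTrace U t₂) := by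
  obtain ⟨β, hβ, hsim⟩ := (traceSim_iff_padEmbed ent).1 h
  exact (traceSim_iff_padEmbed ent).2
    ⟨hideTrace U β, unwraps_hideTrace U hβ, padEmbed_hideTrace ent U hsim⟩

/-- hiding preserves trace simulation: for all traces `t₁, t₂`
and every set of events `U ⊆ Evt`, if `t₁ ⋉ t₂` then
`hide_U(t₁) ⋉ hide_U(t₂)` (given that `⊨_c` is reflexive and transitive). -/
theorem hideTrace_preserves_traceSim {E C : Type} (ent : C → C → Prop)
    (ent_refl : ∀ c : C, ent c c)
    (ent_trans : ∀ c₁ c₂ c₃ : C, ent c₁ c₂ → ent c₂ c₃ → ent c₁ c₃)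
    (U : Set E) (t₁ t₂ : Trace E C) (h : TraceSim ent t₁ t₂) :
    TraceSim ent (hideTrace U t₁) (hideTrace U t₂) :=
  hideTrace_preserves_traceSim_general ent U t₁ t₂ h

end SDPaper
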